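/- arXiv:2305.00043 — 6 statements merged into one kernel-verified Lean document; each statement's English description precedes it below -/
import Mathlib

section
/- Let L, M be positive integers, θ : Fin L → ℂ, P and R_B be M×M complex matrices, S an L×L real symmetric matrix, and β, c real numbers. Let R_c be the (M + L·M)×(M + L·M) complex block-diagonal matrix with upper-left M×M block β • R_B, lower-right (L·M)×(L·M) block c • ((S mapped into ℂ) ⊗ R_B), and zero off-diagonal blocks. Let Q be the (M + L·M)×M complex matrix whose top M×M block is P and whose bottom (L·M)×M block is Θ ⊗ P, where Θ is the L×1 column matrix with entries θ. Then Qᵀ · R_c · Q* = δ_U² • (Pᵀ · R_B · P*), where δ_U² = β + c · (Σ_{i,j} conj(θ_i) S_{ij} θ_j) ∈ ℂ. -/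
/-!
Expanding the block product gives `Pᵀ (β R_B) P* + (Θ ⊗ P)ᵀ (c (S ⊗ R_B)) (Θ ⊗ P)*`. By the
mixed-product rule the second term is `c (Θᵀ S Θ*) ⊗ (Pᵀ R_B P*)`, and since `Θ` is a column the
factor `Θᵀ S Θ*` is a scalar, equal to its transpose `Θᴴ S Θ` because `S` is symmetric.
-/

open Matrix Kronecker

namespace Matrix

variable {l l' m m' n u R : Type*}

theorem transpose_fromRows_mul_fromBlocks_mul_fromRows [Fintype m] [Fintype m'] [Semiring R]
    (A C : Matrix m n R) (B D : Matrix m' n R) (X : Matrix m m R) (Y : Matrix m' m' R) :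
    (fromRows A B)ᵀ * fromBlocks X 0 0 Y * fromRows C D = Aᵀ * X * C + Bᵀ * Y * D := by
  rw [transpose_fromRows, fromCols_mul_fromBlocks, fromCols_mul_fromRows]
  simp only [Matrix.mul_zero, add_zero, zero_add]

theorem transpose_reindex_kronecker_mul_kronecker_mul_reindex_kronecker [Fintype l] [Fintype l']
    [Fintype m] [Fintype m'] [Unique u] [CommSemiring R]
    (v : Matrix l u R) (A : Matrix m n R) (S : Matrix l l' R) (B : Matrix m m' R)
    (w : Matrix l' u R) (C : Matrix m' n R) :
    ((v ⊗ₖ A).reindex (Equiv.refl _) (Equiv.uniqueProd n u))ᵀ * (S ⊗ₖ B)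
        * (w ⊗ₖ C).reindex (Equiv.refl _) (Equiv.uniqueProd n u)
      = (vᵀ * S * w) default default • (Aᵀ * B * C) := by
  set e := Equiv.uniqueProd n u
  calc _ = ((vᵀ ⊗ₖ Aᵀ) * (S ⊗ₖ B) * (w ⊗ₖ C)).submatrix e.symm e.symm := by
        rw [submatrix_mul _ _ _ id _ Function.bijective_id,
          submatrix_mul _ _ _ id _ Function.bijective_id, kroneckerMap_transpose]
        rfl
    _ = ((vᵀ * S * w) ⊗ₖ (Aᵀ * B * C)).submatrix e.symm e.symm := by
        rw [mul_kronecker_mul, mul_kronecker_mul]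
    _ = (vᵀ * S * w) default default • (Aᵀ * B * C) := by
        ext; rfl

theorem IsSymm.transpose_mul_mul_map_star [Fintype l] [CommSemiring R] [StarRing R]
    {S : Matrix l l R} (hS : S.IsSymm) (v : Matrix l u R) :
    vᵀ * S * v.map star = (vᴴ * S * v)ᵀ := by
  rw [transpose_mul, transpose_mul, hS.eq, Matrix.mul_assoc]
  rfl

theorem conjTranspose_mul_mul_apply [Fintype l] [NonUnitalSemiring R] [Star R]
    (v : Matrix l u R) (S : Matrix l l R) (a b : u) :
    (vᴴ * S * v) a b = ∑ i, ∑ j, star (v i a) * S i j * v j b := by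
  simp only [mul_apply, conjTranspose_apply, Finset.sum_mul]
  exact Finset.sum_comm

end Matrix

theorem stmt2_general (L M : ℕ)
    (θ : Fin L → ℂ) (P RB : Matrix (Fin M) (Fin M) ℂ)
    (S : Matrix (Fin L) (Fin L) ℝ) (hS : Sᵀ = S) (β c : ℝ)
    (Θ : Matrix (Fin L) (Fin 1) ℂ) (hΘ : ∀ i j, Θ i j = θ i)
    (Rc : Matrix (Fin M ⊕ Fin L × Fin M) (Fin M ⊕ Fin L × Fin M) ℂ)
    (hRc : Rc = Matrix.fromBlocks ((β : ℂ) • RB) 0 0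
        ((c : ℂ) • ((S.map (fun x => (x : ℂ))) ⊗ₖ RB)))
    (Q : Matrix (Fin M ⊕ Fin L × Fin M) (Fin M) ℂ)
    (hQ : Q = Matrix.fromRows P
        ((Θ ⊗ₖ P).reindex (Equiv.refl (Fin L × Fin M)) (Equiv.uniqueProd (Fin M) (Fin 1)))) :
    Qᵀ * Rc * Q.map star
      = ((β : ℂ) + (c : ℂ) * ∑ i, ∑ j, star (θ i) * (S i j : ℂ) * θ j)
          • (Pᵀ * RB * P.map star) := by
  subst hRc hQ
  have hconj : ((Θ ⊗ₖ P).reindex (Equiv.refl _) (Equiv.uniqueProd (Fin M) (Fin 1))).map star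
      = (Θ.map star ⊗ₖ P.map star).reindex (Equiv.refl _) (Equiv.uniqueProd (Fin M) (Fin 1)) := by
    ext; simp [mul_comm]
  have hquad : (Θᵀ * S.map (fun x => (x : ℂ)) * Θ.map star) default default
      = ∑ i, ∑ j, star (θ i) * (S i j : ℂ) * θ j := by
    rw [(IsSymm.map hS _).transpose_mul_mul_map_star, transpose_apply,
      conjTranspose_mul_mul_apply]
    simp only [hΘ, map_apply]
  rw [fromRows_map, transpose_fromRows_mul_fromBlocks_mul_fromRows, hconj, Matrix.mul_smul,
    Matrix.smul_mul, Matrix.mul_smul, Matrix.smul_mul,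
    transpose_reindex_kronecker_mul_kronecker_mul_reindex_kronecker, hquad, add_smul, mul_smul]

/-- Algebraic core of Lemma 1: the effective uplink covariance collapses to
`δ_U² • (Pᵀ R_B P*)` with `δ_U² = β + c · θᴴ S θ`. -/
theorem stmt2 (L M : ℕ) (hL : 0 < L) (hM : 0 < M)
    (θ : Fin L → ℂ) (P RB : Matrix (Fin M) (Fin M) ℂ)
    (S : Matrix (Fin L) (Fin L) ℝ) (hS : Sᵀ = S) (β c : ℝ)
    (Θ : Matrix (Fin L) (Fin 1) ℂ) (hΘ : ∀ i j, Θ i j = θ i)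
    (Rc : Matrix (Fin M ⊕ Fin L × Fin M) (Fin M ⊕ Fin L × Fin M) ℂ)
    (hRc : Rc = Matrix.fromBlocks ((β : ℂ) • RB) 0 0
        ((c : ℂ) • ((S.map (fun x => (x : ℂ))) ⊗ₖ RB)))
    (Q : Matrix (Fin M ⊕ Fin L × Fin M) (Fin M) ℂ)
    (hQ : Q = Matrix.fromRows P
        ((Θ ⊗ₖ P).reindex (Equiv.refl (Fin L × Fin M)) (Equiv.uniqueProd (Fin M) (Fin 1)))) :
    Qᵀ * Rc * Q.map star
      = ((β : ℂ) + (c : ℂ) * ∑ i, ∑ j, star (θ i) * (S i j : ℂ) * θ j)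
          • (Pᵀ * RB * P.map star) :=
  stmt2_general L M θ P RB S hS β c Θ hΘ Rc hRc Q hQ
end

section
/- Let n be a finite index type, R and M real symmetric n×n matrices with M · M = R, and θ : n → ℂ. Let M' be M with entries coerced to ℂ. Then the squared Frobenius norm of M' · diagonal(θ) · M', i.e., trace((M' · diagonal(θ) · M') · (M' · diagonal(θ) · M')ᴴ), equals the quadratic form Σ_{i,j} conj(θ_i) · (R_{ij})² · θ_j = star(θ) ⬝ᵥ (((R ⊙ R) mapped into ℂ) ·ᵥ θ). -/
open Matrix

/-- Appendix B final step: `‖R^{1/2} Θ R^{1/2}‖_F² = θᴴ (R ⊙ R) θ`. -/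
theorem stmt4 {n : Type*} [Fintype n] [DecidableEq n]
    (R M : Matrix n n ℝ) (hR : Rᵀ = R) (hM : Mᵀ = M) (hMM : M * M = R)
    (θ : n → ℂ) (M' : Matrix n n ℂ) (hM' : M' = M.map (fun x => (x : ℂ))) :
    Matrix.trace ((M' * Matrix.diagonal θ * M') * (M' * Matrix.diagonal θ * M')ᴴ)
      = ∑ i, ∑ j, star (θ i) * ((R i j : ℂ)) ^ 2 * θ j ∧
    Matrix.trace ((M' * Matrix.diagonal θ * M') * (M' * Matrix.diagonal θ * M')ᴴ)
      = star θ ⬝ᵥ (((R ⊙ R).map (fun x => (x : ℂ))).mulVec θ) := by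
  subst hM'
  have hsym : ∀ a b, M a b = M b a := fun a b => by
    conv_lhs => rw [← hM, Matrix.transpose_apply]
  have hRkl : ∀ k l, (∑ i, (M i k : ℂ) * (M i l : ℂ)) = (R k l : ℂ) := by
    intro k l
    rw [← hMM]
    push_cast [Matrix.mul_apply]
    exact Finset.sum_congr rfl fun i _ => by rw [hsym k i]
  have hRkl' : ∀ k l, (∑ j, (M k j : ℂ) * (M l j : ℂ)) = (R k l : ℂ) := by
    intro k l
    rw [← hRkl k l]
    exact Finset.sum_congr rfl fun j _ => by rw [hsym k j, hsym l j]
  have key : Matrix.trace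
      ((M.map (fun x => (x:ℂ)) * Matrix.diagonal θ * M.map (fun x => (x:ℂ))) *
        (M.map (fun x => (x:ℂ)) * Matrix.diagonal θ * M.map (fun x => (x:ℂ)))ᴴ)
      = ∑ k, ∑ l, star (θ k) * ((R k l : ℂ)) ^ 2 * θ l := by
    simp only [Matrix.trace, Matrix.diag, Matrix.mul_apply, Matrix.conjTranspose_apply,
      Matrix.mul_diagonal, Matrix.map_apply, star_sum, star_mul', Complex.star_def,
      Complex.conj_ofReal, Matrix.diagonal_apply, mul_ite, ite_mul, mul_zero, zero_mul,
      Finset.sum_ite_eq, Finset.sum_ite_eq', Finset.mem_univ, if_true,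
      Finset.sum_mul, Finset.mul_sum]
    conv_lhs => enter [2,x]; rw [Finset.sum_comm]
    rw [Finset.sum_comm]
    conv_lhs => enter [2,k,2,x]; rw [Finset.sum_comm]
    conv_lhs => enter [2,k]; rw [Finset.sum_comm]
    refine Finset.sum_congr rfl fun k _ => Finset.sum_congr rfl fun l _ => ?_
    calc ∑ x, ∑ x1, (M x l : ℂ) * θ l * (M l x1) * ((M x k : ℂ) * (starRingEnd ℂ) (θ k) * (M k x1))
        = ∑ x, ∑ x1, ((M x k : ℂ) * M x l) * ((M k x1 : ℂ) * M l x1) * ((starRingEnd ℂ) (θ k) * θ l) := by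
          refine Finset.sum_congr rfl fun x _ => Finset.sum_congr rfl fun x1 _ => ?_
          ring
      _ = (∑ x, (M x k : ℂ) * M x l) * (∑ x1, (M k x1 : ℂ) * M l x1) * ((starRingEnd ℂ) (θ k) * θ l) := by
          simp only [Finset.sum_mul, Finset.mul_sum]
          rw [Finset.sum_comm]
      _ = (starRingEnd ℂ) (θ k) * (R k l : ℂ) ^ 2 * θ l := by
          rw [hRkl k l, hRkl' k l]; ring
  refine ⟨key, key.trans ?_⟩
  simp only [dotProduct, Matrix.mulVec, Matrix.map_apply, Matrix.hadamard_apply, dotProduct,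
    Finset.mul_sum]
  exact Finset.sum_congr rfl fun i _ => Finset.sum_congr rfl fun j _ => by
    simp only [Pi.star_apply]; push_cast; ring
end

section
/- Let M be a positive integer, P_a, P_b, δ strictly positive real numbers, and p : Fin M → ℝ with p_i > 0 for every i. Define g : ℝ → ℝ by g(x) = Σ_{i=1}^{M} log₂(1 + P_a·P_b·x²·p_i⁴ / (δ²·P_b·x·p_i² + δ²·P_a·x·p_i² + δ⁴)). Then g is strictly monotonically increasing on the interval [0, ∞). -/
/-- Monotonicity of the approximate mutual information in the effective channel gain. -/
theorem stmt9 (M : ℕ) (hM : 0 < M) (Pa Pb δ : ℝ)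
    (hPa : 0 < Pa) (hPb : 0 < Pb) (hδ : 0 < δ)
    (p : Fin M → ℝ) (hp : ∀ i, 0 < p i) :
    StrictMonoOn
      (fun x : ℝ => ∑ i, Real.logb 2
        (1 + Pa * Pb * x ^ 2 * (p i) ^ 4 /
          (δ ^ 2 * Pb * x * (p i) ^ 2 + δ ^ 2 * Pa * x * (p i) ^ 2 + δ ^ 4)))
      (Set.Ici (0 : ℝ)) := by
  intro x hx y hy hxy
  simp only [Set.mem_Ici] at hx hy
  apply Finset.sum_lt_sum_of_nonempty
  · exact Finset.univ_nonempty_iff.mpr ⟨⟨0, hM⟩⟩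
  intro i _
  have hpi := hp i
  set A := Pa * Pb * (p i) ^ 4 with hA
  have hA0 : 0 < A := by positivity
  set B := δ ^ 2 * Pb * (p i) ^ 2 + δ ^ 2 * Pa * (p i) ^ 2 with hB
  have hB0 : 0 < B := by positivity
  have hC0 : (0:ℝ) < δ ^ 4 := by positivity
  have hdx : 0 < B * x + δ ^ 4 := by positivity
  have hdy : 0 < B * y + δ ^ 4 := by positivity
  have key : Pa * Pb * x ^ 2 * (p i) ^ 4 /
        (δ ^ 2 * Pb * x * (p i) ^ 2 + δ ^ 2 * Pa * x * (p i) ^ 2 + δ ^ 4)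
      < Pa * Pb * y ^ 2 * (p i) ^ 4 /
        (δ ^ 2 * Pb * y * (p i) ^ 2 + δ ^ 2 * Pa * y * (p i) ^ 2 + δ ^ 4) := by
    have e1 : Pa * Pb * x ^ 2 * (p i) ^ 4 = A * x ^ 2 := by ring
    have e2 : Pa * Pb * y ^ 2 * (p i) ^ 4 = A * y ^ 2 := by ring
    have e3 : δ ^ 2 * Pb * x * (p i) ^ 2 + δ ^ 2 * Pa * x * (p i) ^ 2 + δ ^ 4
        = B * x + δ ^ 4 := by ring
    have e4 : δ ^ 2 * Pb * y * (p i) ^ 2 + δ ^ 2 * Pa * y * (p i) ^ 2 + δ ^ 4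
        = B * y + δ ^ 4 := by ring
    rw [e1, e2, e3, e4, div_lt_div_iff₀ hdx hdy]
    have hxy2 : x ^ 2 < y ^ 2 := by nlinarith
    nlinarith [mul_nonneg (mul_nonneg (mul_nonneg hA0.le hB0.le) (mul_nonneg hx hy)) (sub_nonneg.mpr hxy.le),
      mul_pos (mul_pos hA0 hC0) (sub_pos.mpr hxy2)]
  have hnum : (0:ℝ) ≤ Pa * Pb * x ^ 2 * (p i) ^ 4 /
      (δ ^ 2 * Pb * x * (p i) ^ 2 + δ ^ 2 * Pa * x * (p i) ^ 2 + δ ^ 4) := by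
    positivity
  have h1 : (0:ℝ) < 1 + Pa * Pb * x ^ 2 * (p i) ^ 4 /
      (δ ^ 2 * Pb * x * (p i) ^ 2 + δ ^ 2 * Pa * x * (p i) ^ 2 + δ ^ 4) := by linarith
  exact Real.logb_lt_logb (by norm_num) h1 (by linarith)
end

section
/- Let M be a positive integer, U an M×M complex unitary matrix, p : Fin M → ℝ, and let P_a, P_b, u (= δ_U²), δ² be strictly positive real numbers. Let Z := U · diagonal(i ↦ (p_i)²) · Uᴴ (entries coerced to ℂ). Then det(P_b·P_a·u • Z + δ²·P_a • I_M) · det(P_a·u • Z + δ² • I_M) / det(δ²·P_b·P_a·u • Z + (δ²·P_a) • (P_a·u • Z + δ² • I_M)) = Π_{i=1}^{M} ((P_b·u·p_i² + δ²)·(P_a·u·p_i² + δ²)) / (δ²·P_b·u·p_i² + δ²·P_a·u·p_i² + δ⁴), and all determinants in the denominator are nonzero. -/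
open Matrix

/-- Determinant-to-scalar reduction of equation (39): `Î(ỹ_a; ỹ_b)` as a product of
scalar ratios; `d` plays the role of the noise power `δ²`. -/
theorem stmt12 (M : ℕ) (hM : 0 < M) (U : Matrix (Fin M) (Fin M) ℂ)
    (hU1 : U * Uᴴ = 1) (hU2 : Uᴴ * U = 1) (p : Fin M → ℝ)
    (Pa Pb u d : ℝ) (hPa : 0 < Pa) (hPb : 0 < Pb) (hu : 0 < u) (hd : 0 < d)
    (Z : Matrix (Fin M) (Fin M) ℂ)
    (hZ : Z = U * Matrix.diagonal (fun i => (((p i) ^ 2 : ℝ) : ℂ)) * Uᴴ) :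
    ((↑(Pb * Pa * u) : ℂ) • Z + (↑(d * Pa) : ℂ) • (1 : Matrix (Fin M) (Fin M) ℂ)).det *
        ((↑(Pa * u) : ℂ) • Z + (↑d : ℂ) • (1 : Matrix (Fin M) (Fin M) ℂ)).det /
        ((↑(d * Pb * Pa * u) : ℂ) • Z +
          (↑(d * Pa) : ℂ) • ((↑(Pa * u) : ℂ) • Z + (↑d : ℂ) • (1 : Matrix (Fin M) (Fin M) ℂ))).det
      = ∏ i, ((↑((Pb * u * (p i) ^ 2 + d) * (Pa * u * (p i) ^ 2 + d) /
          (d * Pb * u * (p i) ^ 2 + d * Pa * u * (p i) ^ 2 + d ^ 2)) : ℂ)) ∧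
    ((↑(d * Pb * Pa * u) : ℂ) • Z +
        (↑(d * Pa) : ℂ) • ((↑(Pa * u) : ℂ) • Z + (↑d : ℂ) • (1 : Matrix (Fin M) (Fin M) ℂ))).det
      ≠ 0 := by
  have hdetU : U.det * Uᴴ.det = 1 := by
    rw [← Matrix.det_mul, hU1, Matrix.det_one]
  have key : ∀ a b : ℂ, (a • Z + b • (1 : Matrix (Fin M) (Fin M) ℂ)).det
      = ∏ i, (a * (((p i) ^ 2 : ℝ) : ℂ) + b) := by
    intro a b
    have hdiag : Matrix.diagonal (fun i => a * (((p i) ^ 2 : ℝ) : ℂ) + b)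
        = a • Matrix.diagonal (fun i => (((p i) ^ 2 : ℝ) : ℂ))
          + b • (1 : Matrix (Fin M) (Fin M) ℂ) := by
      ext i j
      by_cases hij : i = j <;>
        simp [Matrix.diagonal_apply, Matrix.one_apply, hij]
    have h1 : a • Z + b • (1 : Matrix (Fin M) (Fin M) ℂ)
        = U * Matrix.diagonal (fun i => a * (((p i) ^ 2 : ℝ) : ℂ) + b) * Uᴴ := by
      rw [hdiag, Matrix.mul_add, Matrix.add_mul, Matrix.mul_smul, Matrix.mul_smul,
        Matrix.smul_mul, Matrix.smul_mul, Matrix.mul_one, hU1, hZ]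
    rw [h1, Matrix.det_mul, Matrix.det_mul, Matrix.det_diagonal]
    calc U.det * (∏ i, (a * (((p i) ^ 2 : ℝ) : ℂ) + b)) * Uᴴ.det
        = (U.det * Uᴴ.det) * ∏ i, (a * (((p i) ^ 2 : ℝ) : ℂ) + b) := by ring
      _ = ∏ i, (a * (((p i) ^ 2 : ℝ) : ℂ) + b) := by rw [hdetU, one_mul]
  have h3 : ((↑(d * Pb * Pa * u) : ℂ) • Z +
        (↑(d * Pa) : ℂ) • ((↑(Pa * u) : ℂ) • Z + (↑d : ℂ) • (1 : Matrix (Fin M) (Fin M) ℂ)))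
      = ((↑(d * Pb * Pa * u + d * Pa * (Pa * u)) : ℂ)) • Z
        + ((↑(d * Pa * d) : ℂ)) • (1 : Matrix (Fin M) (Fin M) ℂ) := by
    push_cast
    rw [smul_add, smul_smul, smul_smul, ← add_assoc, ← add_smul]
  have hrden : ∀ i : Fin M,
      d * Pb * u * (p i) ^ 2 + d * Pa * u * (p i) ^ 2 + d ^ 2 ≠ 0 := by
    intro i
    positivity
  have hCne : ∀ i : Fin M,
      (↑(d * Pb * Pa * u + d * Pa * (Pa * u)) : ℂ) * (((p i) ^ 2 : ℝ) : ℂ)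
        + (↑(d * Pa * d) : ℂ) ≠ 0 := by
    intro i
    have : (↑(d * Pb * Pa * u + d * Pa * (Pa * u)) : ℂ) * (((p i) ^ 2 : ℝ) : ℂ)
        + (↑(d * Pa * d) : ℂ)
        = ((((d * Pb * Pa * u + d * Pa * (Pa * u)) * (p i) ^ 2 + d * Pa * d : ℝ)) : ℂ) := by
      push_cast; ring
    rw [this]
    exact_mod_cast ne_of_gt (by positivity :
      (0:ℝ) < (d * Pb * Pa * u + d * Pa * (Pa * u)) * (p i) ^ 2 + d * Pa * d)
  rw [h3, key, key, key]
  constructor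
  · rw [← Finset.prod_mul_distrib, ← Finset.prod_div_distrib]
    refine Finset.prod_congr rfl fun i _ => ?_
    rw [div_eq_iff (hCne i)]
    push_cast
    rw [div_mul_eq_mul_div, eq_div_iff (by exact_mod_cast hrden i)]
    ring
  · rw [Finset.prod_ne_zero_iff]
    exact fun i _ => hCne i
end

section
/- Let M be a positive integer, U an M×M complex unitary matrix, p : Fin M → ℝ, and let P_a, P_b, u (= δ_U²), e (= δ_E²), δ² be strictly positive real numbers and w (= δ_{U,E}²) a real number. Let Z := U · diagonal(i ↦ (p_i)²) · Uᴴ (entries coerced to ℂ). Then det(P_a·u • Z + δ² • I_M) · det((P_b·P_a·u • Z + δ²·P_a • I_M)·(P_a·e • Z + δ² • I_M) − P_b • (P_a·w • Z)²) / (det(P_a·e • Z + δ² • I_M) · det(δ²·P_b·P_a·u • Z + (δ²·P_a) • (P_a·u • Z + δ² • I_M))) = Π_{i=1}^{M} ((P_a·u·p_i² + δ²)·(P_b·u·p_i² + δ² − P_b·P_a·w²·p_i⁴/(P_a·e·p_i² + δ²))) / (δ²·P_b·u·p_i² + δ²·P_a·u·p_i² + δ⁴), and all determinants in the denominator are nonzero.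 -/
open Matrix

/-- Determinant-to-scalar reduction of the approximate secret key rate `R̂_sk¹`
(equation (48)); `d = δ²`, `u = δ_U²`, `e = δ_E²`, `w = δ_{U,E}²`. -/
theorem stmt13 (M : ℕ) (hM : 0 < M) (U : Matrix (Fin M) (Fin M) ℂ)
    (hU1 : U * Uᴴ = 1) (hU2 : Uᴴ * U = 1) (p : Fin M → ℝ)
    (Pa Pb u e d : ℝ) (hPa : 0 < Pa) (hPb : 0 < Pb) (hu : 0 < u) (he : 0 < e)
    (hd : 0 < d) (w : ℝ)
    (Z : Matrix (Fin M) (Fin M) ℂ)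
    (hZ : Z = U * Matrix.diagonal (fun i => (((p i) ^ 2 : ℝ) : ℂ)) * Uᴴ) :
    ((↑(Pa * u) : ℂ) • Z + (↑d : ℂ) • (1 : Matrix (Fin M) (Fin M) ℂ)).det *
        (((↑(Pb * Pa * u) : ℂ) • Z + (↑(d * Pa) : ℂ) • (1 : Matrix (Fin M) (Fin M) ℂ)) *
            ((↑(Pa * e) : ℂ) • Z + (↑d : ℂ) • (1 : Matrix (Fin M) (Fin M) ℂ)) -
          (↑Pb : ℂ) • ((↑(Pa * w) : ℂ) • Z) ^ 2).det /
        (((↑(Pa * e) : ℂ) • Z + (↑d : ℂ) • (1 : Matrix (Fin M) (Fin M) ℂ)).det *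
          ((↑(d * Pb * Pa * u) : ℂ) • Z +
            (↑(d * Pa) : ℂ) •
              ((↑(Pa * u) : ℂ) • Z + (↑d : ℂ) • (1 : Matrix (Fin M) (Fin M) ℂ))).det)
      = ∏ i, ((↑((Pa * u * (p i) ^ 2 + d) *
            (Pb * u * (p i) ^ 2 + d -
              Pb * Pa * w ^ 2 * (p i) ^ 4 / (Pa * e * (p i) ^ 2 + d)) /
          (d * Pb * u * (p i) ^ 2 + d * Pa * u * (p i) ^ 2 + d ^ 2)) : ℂ)) ∧
    ((↑(Pa * e) : ℂ) • Z + (↑d : ℂ) • (1 : Matrix (Fin M) (Fin M) ℂ)).det ≠ 0 ∧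
    ((↑(d * Pb * Pa * u) : ℂ) • Z +
        (↑(d * Pa) : ℂ) •
          ((↑(Pa * u) : ℂ) • Z + (↑d : ℂ) • (1 : Matrix (Fin M) (Fin M) ℂ))).det ≠ 0 := by
  set D : Matrix (Fin M) (Fin M) ℂ :=
    Matrix.diagonal (fun i => (((p i) ^ 2 : ℝ) : ℂ)) with hDdef
  -- conjugation preserves determinant
  have hdet : ∀ A : Matrix (Fin M) (Fin M) ℂ, (U * A * Uᴴ).det = A.det := by
    intro A
    have h1 : U.det * Uᴴ.det = 1 := by
      rw [← Matrix.det_mul, hU1, Matrix.det_one]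
    calc (U * A * Uᴴ).det = U.det * Uᴴ.det * A.det := by
          rw [Matrix.det_mul, Matrix.det_mul]; ring
      _ = A.det := by rw [h1, one_mul]
  have hUU : ∀ X : Matrix (Fin M) (Fin M) ℂ, Uᴴ * (U * X) = X := by
    intro X; rw [← Matrix.mul_assoc, hU2, Matrix.one_mul]
  have hmul : ∀ A B : Matrix (Fin M) (Fin M) ℂ,
      (U * A * Uᴴ) * (U * B * Uᴴ) = U * (A * B) * Uᴴ := by
    intro A B
    simp only [Matrix.mul_assoc]
    rw [hUU]
  -- a • Z + b • 1 is a conjugated diagonal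
  have hconj : ∀ a b : ℂ, a • Z + b • (1 : Matrix (Fin M) (Fin M) ℂ)
      = U * Matrix.diagonal (fun i => a * (((p i) ^ 2 : ℝ) : ℂ) + b) * Uᴴ := by
    intro a b
    have h1 : Matrix.diagonal (fun i => a * (((p i) ^ 2 : ℝ) : ℂ) + b)
        = a • D + b • (1 : Matrix (Fin M) (Fin M) ℂ) := by
      rw [hDdef, ← Matrix.diagonal_one, ← Matrix.diagonal_smul, ← Matrix.diagonal_smul,
        Matrix.diagonal_add]
      congr 1
      funext i
      simp [smul_eq_mul]
    rw [h1, hZ, Matrix.mul_add, Matrix.add_mul, Matrix.mul_smul, Matrix.smul_mul,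
      Matrix.mul_smul, Matrix.smul_mul, Matrix.mul_one, hU1]
  have key : ∀ a b : ℂ, (a • Z + b • (1 : Matrix (Fin M) (Fin M) ℂ)).det
      = ∏ i, (a * (((p i) ^ 2 : ℝ) : ℂ) + b) := by
    intro a b
    rw [hconj, hdet, Matrix.det_diagonal]
  -- scalar multiples of Z
  have hZc : ∀ c : ℂ, c • Z
      = U * Matrix.diagonal (fun i => c * (((p i) ^ 2 : ℝ) : ℂ)) * Uᴴ := by
    intro c
    have := hconj c 0
    simpa using this
  -- the middle determinant
  have hmid : (((↑(Pb * Pa * u) : ℂ) • Z + (↑(d * Pa) : ℂ) • (1 : Matrix (Fin M) (Fin M) ℂ)) *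
            ((↑(Pa * e) : ℂ) • Z + (↑d : ℂ) • (1 : Matrix (Fin M) (Fin M) ℂ)) -
          (↑Pb : ℂ) • ((↑(Pa * w) : ℂ) • Z) ^ 2).det
      = ∏ i, ((↑(Pb * Pa * u) * (((p i) ^ 2 : ℝ) : ℂ) + ↑(d * Pa)) *
            (↑(Pa * e) * (((p i) ^ 2 : ℝ) : ℂ) + ↑d) -
          ↑Pb * (↑(Pa * w) * (((p i) ^ 2 : ℝ) : ℂ)) ^ 2) := by
    have hfun : ((↑Pb : ℂ) • fun i =>
          ((↑(Pa * w) : ℂ) * (((p i) ^ 2 : ℝ) : ℂ)) * ((↑(Pa * w) : ℂ) * (((p i) ^ 2 : ℝ) : ℂ)))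
        = fun i => (↑Pb : ℂ) * ((↑(Pa * w) : ℂ) * (((p i) ^ 2 : ℝ) : ℂ)) ^ 2 := by
      funext i
      simp only [Pi.smul_apply, smul_eq_mul]
      ring
    have hsm : (↑Pb : ℂ) • ((↑(Pa * w) : ℂ) • Z) ^ 2
        = U * Matrix.diagonal
            (fun i => (↑Pb : ℂ) * ((↑(Pa * w) : ℂ) * (((p i) ^ 2 : ℝ) : ℂ)) ^ 2) * Uᴴ := by
      rw [sq, hZc, hmul, Matrix.diagonal_mul_diagonal, ← Matrix.smul_mul, ← Matrix.mul_smul,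
        ← Matrix.diagonal_smul, hfun]
    rw [hconj, hconj, hmul, hsm, ← Matrix.sub_mul, ← Matrix.mul_sub, hdet,
      Matrix.diagonal_mul_diagonal, Matrix.diagonal_sub, Matrix.det_diagonal]
  -- rewrite the last denominator matrix as a • Z + b • 1
  have hden2 : ((↑(d * Pb * Pa * u) : ℂ) • Z +
        (↑(d * Pa) : ℂ) •
          ((↑(Pa * u) : ℂ) • Z + (↑d : ℂ) • (1 : Matrix (Fin M) (Fin M) ℂ)))
      = ((↑(d * Pb * Pa * u) : ℂ) + (↑(d * Pa) : ℂ) * (↑(Pa * u) : ℂ)) • Z +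
        ((↑(d * Pa) : ℂ) * (↑d : ℂ)) • (1 : Matrix (Fin M) (Fin M) ℂ) := by
    module
  -- nonzeroness of the two denominator determinants
  have hne1 : ((↑(Pa * e) : ℂ) • Z + (↑d : ℂ) • (1 : Matrix (Fin M) (Fin M) ℂ)).det ≠ 0 := by
    rw [key]
    apply Finset.prod_ne_zero_iff.mpr
    intro i _
    have hpos : (0 : ℝ) < Pa * e * (p i) ^ 2 + d := by positivity
    have : ((↑(Pa * e) : ℂ) * (((p i) ^ 2 : ℝ) : ℂ) + ↑d)
        = ((Pa * e * (p i) ^ 2 + d : ℝ) : ℂ) := by push_cast; ring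
    rw [this]
    exact_mod_cast ne_of_gt hpos
  have hne2 : ((↑(d * Pb * Pa * u) : ℂ) • Z +
        (↑(d * Pa) : ℂ) •
          ((↑(Pa * u) : ℂ) • Z + (↑d : ℂ) • (1 : Matrix (Fin M) (Fin M) ℂ))).det ≠ 0 := by
    rw [hden2, key]
    apply Finset.prod_ne_zero_iff.mpr
    intro i _
    have hpos : (0 : ℝ) < (d * Pb * Pa * u + d * Pa * (Pa * u)) * (p i) ^ 2 + d * Pa * d := by
      positivity
    have : (((↑(d * Pb * Pa * u) : ℂ) + (↑(d * Pa) : ℂ) * (↑(Pa * u) : ℂ)) *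
          (((p i) ^ 2 : ℝ) : ℂ) + (↑(d * Pa) : ℂ) * (↑d : ℂ))
        = (((d * Pb * Pa * u + d * Pa * (Pa * u)) * (p i) ^ 2 + d * Pa * d : ℝ) : ℂ) := by
      push_cast; ring
    rw [this]
    exact_mod_cast ne_of_gt hpos
  refine ⟨?_, hne1, hne2⟩
  rw [hden2, hmid, key, key, key, ← Finset.prod_mul_distrib, ← Finset.prod_mul_distrib,
    ← Finset.prod_div_distrib]
  apply Finset.prod_congr rfl
  intro i _
  have h1 : Pa * e * (p i) ^ 2 + d ≠ 0 := by positivity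
  have h2 : (d * Pb * Pa * u + d * Pa * (Pa * u)) * (p i) ^ 2 + d * Pa * d ≠ 0 := by positivity
  have h3 : d * Pb * u * (p i) ^ 2 + d * Pa * u * (p i) ^ 2 + d ^ 2 ≠ 0 := by positivity
  have hre : (Pa * u * (p i) ^ 2 + d) *
        ((Pb * Pa * u * (p i) ^ 2 + d * Pa) * (Pa * e * (p i) ^ 2 + d) -
          Pb * (Pa * w * (p i) ^ 2) ^ 2) /
        ((Pa * e * (p i) ^ 2 + d) *
          ((d * Pb * Pa * u + d * Pa * (Pa * u)) * (p i) ^ 2 + d * Pa * d))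
      = (Pa * u * (p i) ^ 2 + d) *
          (Pb * u * (p i) ^ 2 + d -
            Pb * Pa * w ^ 2 * (p i) ^ 4 / (Pa * e * (p i) ^ 2 + d)) /
        (d * Pb * u * (p i) ^ 2 + d * Pa * u * (p i) ^ 2 + d ^ 2) := by
    field_simp
  calc ((↑(Pa * u) : ℂ) * (((p i) ^ 2 : ℝ) : ℂ) + ↑d) *
        ((↑(Pb * Pa * u) * (((p i) ^ 2 : ℝ) : ℂ) + ↑(d * Pa)) *
            (↑(Pa * e) * (((p i) ^ 2 : ℝ) : ℂ) + ↑d) -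
          ↑Pb * (↑(Pa * w) * (((p i) ^ 2 : ℝ) : ℂ)) ^ 2) /
        ((↑(Pa * e) * (((p i) ^ 2 : ℝ) : ℂ) + ↑d) *
          (((↑(d * Pb * Pa * u) : ℂ) + ↑(d * Pa) * ↑(Pa * u)) * (((p i) ^ 2 : ℝ) : ℂ) +
            ↑(d * Pa) * ↑d))
      = (((Pa * u * (p i) ^ 2 + d) *
          ((Pb * Pa * u * (p i) ^ 2 + d * Pa) * (Pa * e * (p i) ^ 2 + d) -
            Pb * (Pa * w * (p i) ^ 2) ^ 2) /
          ((Pa * e * (p i) ^ 2 + d) *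
            ((d * Pb * Pa * u + d * Pa * (Pa * u)) * (p i) ^ 2 + d * Pa * d)) : ℝ) : ℂ) := by
        push_cast; ring
    _ = _ := by rw [hre]
end

section
/- Let M be a positive integer, U an M×M complex unitary matrix, p : Fin M → ℝ, and let P_a, P_b, u (= δ_U²), e (= δ_E²), δ² be strictly positive real numbers and w (= δ_{U,E}²) a real number. Let Z := U · diagonal(i ↦ (p_i)²) · Uᴴ (entries coerced to ℂ). Then det(P_b·P_a·u • Z + δ²·P_a • I_M) · det((P_a·u • Z + δ² • I_M)·(P_a·e • Z + δ² • I_M) − (P_a·w • Z)²) / (det(P_a·e • Z + δ² • I_M) · det(δ²·P_b·P_a·u • Z + (δ²·P_a) • (P_a·u • Z + δ² • I_M))) = Π_{i=1}^{M} ((P_b·u·p_i² + δ²)·(P_a·u·p_i² + δ² − P_a²·w²·p_i⁴/(P_a·e·p_i² + δ²))) / (δ²·P_b·u·p_i² + δ²·P_a·u·p_i² + δ⁴), and all determinants in the denominator are nonzero. -/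
open Matrix

/-- Determinant-to-scalar reduction of the approximate secret key rate `R̂_sk²`
(equation (49)); `d = δ²`, `u = δ_U²`, `e = δ_E²`, `w = δ_{U,E}²`. -/
theorem stmt14 (M : ℕ) (hM : 0 < M) (U : Matrix (Fin M) (Fin M) ℂ)
    (hU1 : U * Uᴴ = 1) (hU2 : Uᴴ * U = 1) (p : Fin M → ℝ)
    (Pa Pb u e d : ℝ) (hPa : 0 < Pa) (hPb : 0 < Pb) (hu : 0 < u) (he : 0 < e)
    (hd : 0 < d) (w : ℝ)
    (Z : Matrix (Fin M) (Fin M) ℂ)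
    (hZ : Z = U * Matrix.diagonal (fun i => (((p i) ^ 2 : ℝ) : ℂ)) * Uᴴ) :
    ((↑(Pb * Pa * u) : ℂ) • Z + (↑(d * Pa) : ℂ) • (1 : Matrix (Fin M) (Fin M) ℂ)).det *
        (((↑(Pa * u) : ℂ) • Z + (↑d : ℂ) • (1 : Matrix (Fin M) (Fin M) ℂ)) *
            ((↑(Pa * e) : ℂ) • Z + (↑d : ℂ) • (1 : Matrix (Fin M) (Fin M) ℂ)) -
          ((↑(Pa * w) : ℂ) • Z) ^ 2).det /
        (((↑(Pa * e) : ℂ) • Z + (↑d : ℂ) • (1 : Matrix (Fin M) (Fin M) ℂ)).det *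
          ((↑(d * Pb * Pa * u) : ℂ) • Z +
            (↑(d * Pa) : ℂ) •
              ((↑(Pa * u) : ℂ) • Z + (↑d : ℂ) • (1 : Matrix (Fin M) (Fin M) ℂ))).det)
      = ∏ i, ((↑((Pb * u * (p i) ^ 2 + d) *
            (Pa * u * (p i) ^ 2 + d -
              Pa ^ 2 * w ^ 2 * (p i) ^ 4 / (Pa * e * (p i) ^ 2 + d)) /
          (d * Pb * u * (p i) ^ 2 + d * Pa * u * (p i) ^ 2 + d ^ 2)) : ℂ)) ∧
    ((↑(Pa * e) : ℂ) • Z + (↑d : ℂ) • (1 : Matrix (Fin M) (Fin M) ℂ)).det ≠ 0 ∧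
    ((↑(d * Pb * Pa * u) : ℂ) • Z +
        (↑(d * Pa) : ℂ) •
          ((↑(Pa * u) : ℂ) • Z + (↑d : ℂ) • (1 : Matrix (Fin M) (Fin M) ℂ))).det ≠ 0 := by
  have hUdet : U.det * Uᴴ.det = 1 := by rw [← Matrix.det_mul, hU1, Matrix.det_one]
  have hconj : ∀ a b : ℝ, (↑a : ℂ) • Z + (↑b : ℂ) • (1 : Matrix (Fin M) (Fin M) ℂ)
      = U * Matrix.diagonal (fun i => ((a * (p i)^2 + b : ℝ) : ℂ)) * Uᴴ := by
    intro a b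
    have key : U * ((↑a : ℂ) • Matrix.diagonal (fun i => (((p i)^2 : ℝ) : ℂ))
          + (↑b : ℂ) • (1 : Matrix (Fin M) (Fin M) ℂ)) * Uᴴ
        = (↑a : ℂ) • Z + (↑b : ℂ) • (1 : Matrix (Fin M) (Fin M) ℂ) := by
      rw [Matrix.mul_add, Matrix.add_mul, mul_smul_comm, mul_smul_comm,
        smul_mul_assoc, smul_mul_assoc, Matrix.mul_one, hU1, hZ]
    rw [← key]
    congr 2
    ext i j
    by_cases h : i = j
    · subst h
      simp [Matrix.diagonal_apply_eq, Matrix.one_apply_eq]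
      try push_cast
      try ring
    · simp [Matrix.diagonal_apply_ne _ h, Matrix.one_apply_ne h]
  have hmul : ∀ f g : Fin M → ℂ,
      (U * Matrix.diagonal f * Uᴴ) * (U * Matrix.diagonal g * Uᴴ)
        = U * Matrix.diagonal (fun i => f i * g i) * Uᴴ := by
    intro f g
    simp only [Matrix.mul_assoc]
    rw [← Matrix.mul_assoc Uᴴ U, hU2, Matrix.one_mul,
      ← Matrix.mul_assoc (Matrix.diagonal f), Matrix.diagonal_mul_diagonal]
  have hdetconj : ∀ f : Fin M → ℂ, (U * Matrix.diagonal f * Uᴴ).det = ∏ i, f i := by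
    intro f
    rw [Matrix.det_mul, Matrix.det_mul, mul_comm U.det, mul_assoc, hUdet, mul_one,
      Matrix.det_diagonal]
  set a : Fin M → ℝ := fun i => Pb * Pa * u * (p i)^2 + d * Pa with ha
  set b : Fin M → ℝ := fun i => (Pa * u * (p i)^2 + d) * (Pa * e * (p i)^2 + d) - (Pa * w * (p i)^2)^2 with hb
  set c : Fin M → ℝ := fun i => Pa * e * (p i)^2 + d with hc
  set g : Fin M → ℝ := fun i => d * Pb * Pa * u * (p i)^2 + d * Pa * (Pa * u * (p i)^2 + d) with hg
  have hcpos : ∀ i, 0 < c i := fun i => by simp only [hc]; positivity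
  have hgpos : ∀ i, 0 < g i := fun i => by simp only [hg]; positivity
  have hd1 : ((↑(Pb * Pa * u) : ℂ) • Z + (↑(d * Pa) : ℂ) • (1 : Matrix (Fin M) (Fin M) ℂ)).det
      = ↑(∏ i, a i) := by
    rw [hconj, hdetconj, Complex.ofReal_prod]
  have hd3 : ((↑(Pa * e) : ℂ) • Z + (↑d : ℂ) • (1 : Matrix (Fin M) (Fin M) ℂ)).det
      = ↑(∏ i, c i) := by
    rw [hconj, hdetconj, Complex.ofReal_prod]
  have hZw : ((↑(Pa * w) : ℂ) • Z) = U * Matrix.diagonal (fun i => ((Pa * w * (p i)^2 : ℝ) : ℂ)) * Uᴴ := by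
    have h := hconj (Pa * w) 0
    simpa using h
  have hd2 : (((↑(Pa * u) : ℂ) • Z + (↑d : ℂ) • (1 : Matrix (Fin M) (Fin M) ℂ)) *
            ((↑(Pa * e) : ℂ) • Z + (↑d : ℂ) • (1 : Matrix (Fin M) (Fin M) ℂ)) -
          ((↑(Pa * w) : ℂ) • Z) ^ 2).det = ↑(∏ i, b i) := by
    rw [hconj, hconj, hZw, sq, hmul, hmul, ← Matrix.sub_mul, ← Matrix.mul_sub,
      Matrix.diagonal_sub, hdetconj, Complex.ofReal_prod]
    refine Finset.prod_congr rfl fun i _ => ?_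
    simp only [Pi.sub_apply, hb]
    push_cast
    ring
  have hd4 : ((↑(d * Pb * Pa * u) : ℂ) • Z +
        (↑(d * Pa) : ℂ) • ((↑(Pa * u) : ℂ) • Z + (↑d : ℂ) • (1 : Matrix (Fin M) (Fin M) ℂ))).det
      = ↑(∏ i, g i) := by
    have h : ((↑(d * Pb * Pa * u) : ℂ) • Z +
        (↑(d * Pa) : ℂ) • ((↑(Pa * u) : ℂ) • Z + (↑d : ℂ) • (1 : Matrix (Fin M) (Fin M) ℂ)))
        = (↑(d * Pb * Pa * u + d * Pa * (Pa * u)) : ℂ) • Z + (↑(d * Pa * d) : ℂ) • (1 : Matrix (Fin M) (Fin M) ℂ) := by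
      rw [smul_add, smul_smul, smul_smul, ← add_assoc, ← add_smul]
      congr 1
      · congr 1
        push_cast
        ring
      · congr 1
        push_cast
        ring
    rw [h, hconj, hdetconj, Complex.ofReal_prod]
    refine Finset.prod_congr rfl fun i _ => ?_
    simp only [hg]
    push_cast
    ring
  refine ⟨?_, ?_, ?_⟩
  · rw [hd1, hd2, hd3, hd4]
    rw [← Complex.ofReal_mul, ← Complex.ofReal_mul, ← Complex.ofReal_div,
      ← Complex.ofReal_prod]
    congr 1
    rw [← Finset.prod_mul_distrib, ← Finset.prod_mul_distrib, ← Finset.prod_div_distrib]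
    refine Finset.prod_congr rfl fun i _ => ?_
    have hci := (hcpos i).ne'
    have hgi := (hgpos i).ne'
    have hden : d * Pb * u * (p i)^2 + d * Pa * u * (p i)^2 + d^2 ≠ 0 := by positivity
    simp only [ha, hb, hc, hg]
    field_simp
    ring
  · rw [hd3]
    exact_mod_cast (Finset.prod_pos (fun i _ => hcpos i)).ne'
  · rw [hd4]
    exact_mod_cast (Finset.prod_pos (fun i _ => hgpos i)).ne'
end
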